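/- arXiv:2006.11409 — 5 statements merged into one kernel-verified Lean document; each statement's English description precedes it below -/
import Mathlib

section
/- Let (X,d) be a rectangular b-metric space with coefficient s ≥ 1, let (x_n) be a Cauchy sequence in X with x_n ≠ x_m for all m ≠ n, converging to a point x, and let y ∈ X with y ≠ x. Then (1/s)·d(x,y) ≤ liminf_n d(x_n,y) ≤ limsup_n d(x_n,y) ≤ s·d(x,y). -/
open Filter Topology

def RectB {X : Type*} (d : X → X → ℝ) (s : ℝ) : Prop :=
  (∀ x y, 0 ≤ d x y) ∧
  (∀ x y, d x y = 0 ↔ x = y) ∧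
  (∀ x y, d x y = d y x) ∧
  (∀ x y u v, u ≠ v → u ≠ x → u ≠ y → v ≠ x → v ≠ y →
    d x y ≤ s * (d x u + d u v + d v y))

def ConvTo {X : Type*} (d : X → X → ℝ) (x : ℕ → X) (a : X) : Prop :=
  Tendsto (fun n => d (x n) a) atTop (𝓝 0)

def DCauchy {X : Type*} (d : X → X → ℝ) (x : ℕ → X) : Prop :=
  ∀ ε > 0, ∃ N, ∀ m ≥ N, ∀ n ≥ N, d (x m) (x n) < ε

def IsTheta (θ : ℝ → ℝ) : Prop :=
  (∀ t, 0 < t → 1 < θ t) ∧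
  StrictMonoOn θ (Set.Ioi 0) ∧
  ContinuousOn θ (Set.Ioi 0) ∧
  ∀ x : ℕ → ℝ, (∀ n, 0 < x n) →
    (Tendsto (fun n => θ (x n)) atTop (𝓝 1) ↔ Tendsto x atTop (𝓝 0))

def IsPhi (φ : ℝ → ℝ) : Prop :=
  (∀ t, 1 ≤ t → 1 ≤ φ t) ∧
  MonotoneOn φ (Set.Ici 1) ∧
  ContinuousOn φ (Set.Ici 1) ∧
  ∀ t, 1 < t → Tendsto (fun n => φ^[n] t) atTop (𝓝 1)

def TriAdm {X : Type*} (T : X → X) (α η : X → X → ℝ) : Prop :=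
  (∀ x y, 1 ≤ α x y → 1 ≤ α (T x) (T y)) ∧
  (∀ x y, η x y ≤ 1 → η (T x) (T y) ≤ 1) ∧
  (∀ x y z, 1 ≤ α x y → 1 ≤ α y z → 1 ≤ α x z) ∧
  (∀ x y z, η x y ≤ 1 → η y z ≤ 1 → η x z ≤ 1)

def AEComplete {X : Type*} (d α η : X → X → ℝ) : Prop :=
  ∀ x : ℕ → X, (∀ n, 1 ≤ α (x n) (x (n+1)) ∨ η (x n) (x (n+1)) ≤ 1) →
    DCauchy d x → ∃ a, ConvTo d x a

def AEContinuous {X : Type*} (d α η : X → X → ℝ) (T : X → X) : Prop :=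
  ∀ (x : ℕ → X) (a : X),
    (∀ n, 1 ≤ α (x n) (x (n+1)) ∨ η (x n) (x (n+1)) ≤ 1) →
    ConvTo d x a → ConvTo d (fun n => T (x n)) (T a)

def AERegular {X : Type*} (d α η : X → X → ℝ) : Prop :=
  ∀ (x : ℕ → X) (a : X),
    (∀ n, 1 ≤ α (x n) (x (n+1)) ∨ η (x n) (x (n+1)) ≤ 1) →
    ConvTo d x a → ∀ n, 1 ≤ α (x n) a ∨ η (x n) a ≤ 1

def AEContr {X : Type*} (d α η : X → X → ℝ) (T : X → X) (θ φ : ℝ → ℝ)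
    (s β₁ β₂ β₃ β₄ : ℝ) : Prop :=
  ∀ x y, (1 ≤ α x y ∨ η x y ≤ 1) → 0 < d (T x) (T y) →
    θ (s ^ 2 * d (T x) (T y)) ≤
      φ (θ (β₁ * d x y + β₂ * d (T x) x + β₃ * d (T y) y + β₄ * d y (T x)))

theorem stmt1 {X : Type*} (d : X → X → ℝ) (s : ℝ) (hs : 1 ≤ s)
    (hd : RectB d s) (x : ℕ → X) (hC : DCauchy d x)
    (hdist : ∀ m n, m ≠ n → x m ≠ x n) (a : X) (hx : ConvTo d x a)
    (y : X) (hya : y ≠ a) :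
    (1 / s) * d a y ≤ liminf (fun n => d (x n) y) atTop ∧
    liminf (fun n => d (x n) y) atTop ≤ limsup (fun n => d (x n) y) atTop ∧
    limsup (fun n => d (x n) y) atTop ≤ s * d a y := by
  obtain ⟨hpos, hzero, hsymm, hquad⟩ := hd
  have hs0 : (0:ℝ) < s := lt_of_lt_of_le one_pos hs
  have hne : ∀ b : X, ∀ᶠ n in atTop, x n ≠ b := by
    intro b
    by_cases h : ∃ m, x m = b
    · obtain ⟨m, hm⟩ := h
      filter_upwards [eventually_gt_atTop m] with n hn h'
      exact hdist n m (Nat.ne_of_gt hn) (h'.trans hm.symm)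
    · exact Eventually.of_forall fun n h' => h ⟨n, h'⟩
  have hshift : ∀ b : X, ∀ᶠ n in atTop, x (n+1) ≠ b := by
    intro b
    obtain ⟨N, hN⟩ := eventually_atTop.1 (hne b)
    exact eventually_atTop.2 ⟨N, fun n hn => hN (n+1) (le_trans hn (Nat.le_succ n))⟩
  have hstep : Tendsto (fun n => d (x n) (x (n+1))) atTop (𝓝 0) := by
    rw [Metric.tendsto_atTop]
    intro ε hε
    obtain ⟨N, hN⟩ := hC ε hε
    exact ⟨N, fun n hn => by
      rw [Real.dist_eq, sub_zero, abs_of_nonneg (hpos _ _)]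
      exact hN n hn (n+1) (le_trans hn (Nat.le_succ n))⟩
  have hxa1 : Tendsto (fun n => d (x (n+1)) a) atTop (𝓝 0) :=
    hx.comp (tendsto_add_atTop_nat 1)
  -- eventual inequalities
  have hev2 : ∀ᶠ n in atTop,
      d (x n) y ≤ s * (d (x n) (x (n+1)) + d (x (n+1)) a + d a y) := by
    filter_upwards [hne a, hne y, hshift a, hshift y] with n h1 h2 h3 h4
    exact hquad (x n) y (x (n+1)) a h3 (hdist (n+1) n (by omega)) h4
      (fun h => h1 h.symm) (fun h => hya h.symm)
  have hev1 : ∀ᶠ n in atTop,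
      (1/s) * d a y - d (x (n+1)) a - d (x n) (x (n+1)) ≤ d (x n) y := by
    filter_upwards [hne a, hne y, hshift a, hshift y] with n h1 h2 h3 h4
    have h := hquad a y (x (n+1)) (x n) (hdist (n+1) n (by omega)) h3 h4 h1 h2
    have h' : (1/s) * d a y ≤ d a (x (n+1)) + d (x (n+1)) (x n) + d (x n) y := by
      rw [one_div, inv_mul_le_iff₀ hs0] at *
      linarith
    rw [hsymm a (x (n+1)), hsymm (x (n+1)) (x n)] at h'
    linarith
  -- limits of auxiliary sequences
  have hv : Tendsto (fun n => s * (d (x n) (x (n+1)) + d (x (n+1)) a + d a y))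
      atTop (𝓝 (s * d a y)) := by
    have := ((hstep.add hxa1).add (tendsto_const_nhds (x := d a y))).const_mul s
    simpa using this
  have hw : Tendsto (fun n => (1/s) * d a y - d (x (n+1)) a - d (x n) (x (n+1)))
      atTop (𝓝 ((1/s) * d a y)) := by
    have := (tendsto_const_nhds (x := (1/s) * d a y)).sub hxa1 |>.sub hstep
    simpa using this
  have hbd_ge : IsBoundedUnder (· ≥ ·) atTop (fun n => d (x n) y) :=
    isBoundedUnder_of ⟨0, fun n => hpos (x n) y⟩
  have hbd_le : IsBoundedUnder (· ≤ ·) atTop (fun n => d (x n) y) :=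
    (hv.isBoundedUnder_le).mono_le hev2
  refine ⟨?_, liminf_le_limsup hbd_le hbd_ge, ?_⟩
  · calc (1/s) * d a y = liminf (fun n => (1/s) * d a y - d (x (n+1)) a - d (x n) (x (n+1))) atTop := (hw.liminf_eq).symm
    _ ≤ liminf (fun n => d (x n) y) atTop :=
        liminf_le_liminf hev1 hw.isBoundedUnder_ge hbd_le.isCoboundedUnder_ge
  · calc limsup (fun n => d (x n) y) atTop
        ≤ limsup (fun n => s * (d (x n) (x (n+1)) + d (x (n+1)) a + d a y)) atTop :=
        limsup_le_limsup hev2 (hbd_ge.isCoboundedUnder_le) (hv.isBoundedUnder_le)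
    _ = s * d a y := hv.limsup_eq
end

section
/- Let (X,d) be an (α,η)-complete rectangular b-metric space with s > 1, T : X → X triangular (α,η)-admissible, (α,η)-continuous, with x₀ satisfying α(x₀,Tx₀) ≥ 1 or η(x₀,Tx₀) ≤ 1, and suppose there exist θ ∈ Θ and k ∈ (0,1) such that θ(s²·d(Tx,Ty)) ≤ [θ(d(x,y))]^k whenever (α(x,y) ≥ 1 or η(x,y) ≤ 1) and d(Tx,Ty) > 0. Then T has a fixed point, unique whenever α(z,u) ≥ 1 or η(z,u) ≤ 1 for all fixed points z,u. -/
/-!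
The θ-condition with `k < 1` and `θ` strictly increasing gives `s² d(Tx, Ty) ≤ d(x, y)` whenever
`x, y` are (α, η)-related, and triangular admissibility makes any two points of the Picard orbit
of `x₀` related. Hence the distances from `xₙ` to `xₙ₊₁` and to `xₙ₊₂` decay like `s⁻²ⁿ`. Unless
the orbit stalls at a fixed point, the consecutive distances strictly decrease, so the orbit is
injective; this is what lets the rectangle inequality (which needs four distinct points) be applied
through `xₙ₊₁, xₙ₊₂`, bounding every `d(xₙ, xₙ₊ₚ)` geometrically. The orbit is therefore Cauchy with
some limit `a`, and the rectangle inequality through `xₙ, xₙ₊₁` together with (α, η)-continuity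
gives `Ta = a`. Uniqueness is the contraction inequality applied to two fixed points.
-/

open Filter Topology

open Function

def AERel {X : Type*} (α η : X → X → ℝ) (x y : X) : Prop :=
  1 ≤ α x y ∨ η x y ≤ 1

lemma IsTheta.lt_of_le_rpow {θ : ℝ → ℝ} (hθ : IsTheta θ) {k a b : ℝ} (hk : k < 1)
    (ha : 0 < a) (hb : 0 < b) (h : θ a ≤ θ b ^ k) : a < b :=
  (hθ.2.1.lt_iff_lt ha hb).mp (h.trans_lt (Real.rpow_lt_self_of_one_lt (hθ.1 b hb) hk))

section Orbit

variable {X : Type*} {T : X → X}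

lemma TriAdm.aeRel_apply {α η : X → X → ℝ} (hadm : TriAdm T α η) {x y : X}
    (h : AERel α η x y) : AERel α η (T x) (T y) :=
  h.imp (hadm.1 x y) (hadm.2.1 x y)

lemma rel_iterate_of_lt (r : X → X → Prop) [IsTrans X r] (hT : ∀ x y, r x y → r (T x) (T y))
    {x₀ : X} (h₀ : r x₀ (T x₀)) {n m : ℕ} (hnm : n < m) : r (T^[n] x₀) (T^[m] x₀) := by
  refine Nat.rel_of_forall_rel_succ_of_lt r (f := fun n => T^[n] x₀) (fun n => ?_) hnm
  induction n with
  | zero => exact h₀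
  | succ n ih => simpa only [iterate_succ_apply'] using hT _ _ ih

lemma TriAdm.aeRel_iterate_of_lt {α η : X → X → ℝ} (hadm : TriAdm T α η) {x₀ : X}
    (h₀ : AERel α η x₀ (T x₀)) {n m : ℕ} (hnm : n < m) :
    AERel α η (T^[n] x₀) (T^[m] x₀) := by
  rcases h₀ with h₀ | h₀
  · have : IsTrans X (fun x y => 1 ≤ α x y) := ⟨hadm.2.2.1⟩
    exact Or.inl (rel_iterate_of_lt _ hadm.1 h₀ hnm)
  · have : IsTrans X (fun x y => η x y ≤ 1) := ⟨hadm.2.2.2⟩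
    exact Or.inr (rel_iterate_of_lt _ hadm.2.1 h₀ hnm)

lemma dist_iterate_le {d : X → X → ℝ} {r : X → X → Prop} {c : ℝ} (hc : 0 < c)
    (hr : ∀ x y, r x y → r (T x) (T y)) (hT : ∀ x y, r x y → c * d (T x) (T y) ≤ d x y)
    {x y : X} (hxy : r x y) (n : ℕ) : d (T^[n] x) (T^[n] y) ≤ c⁻¹ ^ n * d x y := by
  induction n generalizing x y with
  | zero => simp
  | succ n ih =>
    calc d (T^[n + 1] x) (T^[n + 1] y) = d (T^[n] (T x)) (T^[n] (T y)) := rfl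
      _ ≤ c⁻¹ ^ n * d (T x) (T y) := ih (hr x y hxy)
      _ ≤ c⁻¹ ^ n * (c⁻¹ * d x y) := by
        gcongr
        rw [le_inv_mul_iff₀ hc]
        exact hT x y hxy
      _ = c⁻¹ ^ (n + 1) * d x y := by ring

lemma injective_iterate_of_strictAnti {d : X → X → ℝ} {x₀ : X}
    (h : StrictAnti fun n => d (T^[n] x₀) (T^[n + 1] x₀)) : Injective fun n => T^[n] x₀ := by
  intro n m hnm
  by_contra hne
  have hstep : T^[n + 1] x₀ = T^[m + 1] x₀ := by
    simp only [iterate_succ_apply']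
    exact congrArg T hnm
  rcases lt_or_gt_of_ne hne with hlt | hlt <;> exact (h hlt).ne (by simp only [hnm, hstep])

end Orbit

namespace RectB

variable {X : Type*} {d : X → X → ℝ} {s : ℝ}

lemma dist_le_of_geometric (hd : RectB d s) (hs : 1 ≤ s) {x : ℕ → X} (hx : Injective x)
    {q D : ℝ} (hq : 0 ≤ q) (hsq : s * q ^ 2 < 1)
    (h₁ : ∀ n, d (x n) (x (n + 1)) ≤ D * q ^ n) (h₂ : ∀ n, d (x n) (x (n + 2)) ≤ D * q ^ n)
    (p n : ℕ) : d (x n) (x (n + p)) ≤ s * D * (1 + q) / (1 - s * q ^ 2) * q ^ n := by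
  set M := s * D * (1 + q) / (1 - s * q ^ 2)
  have hs₀ : 0 ≤ s := by linarith
  have hD : 0 ≤ D := by simpa using (hd.1 _ _).trans (h₁ 0)
  have hM₀ : 0 ≤ M := div_nonneg (by positivity) (by linarith)
  -- `M` solves `M = s (D + D q + M q²)`, the bound produced by one rectangle step.
  have hM : s * D * (1 + q) + s * M * q ^ 2 = M := by
    simp only [M]
    field_simp [(by linarith : (1 - s * q ^ 2) ≠ 0)]
    ring
  have hDM : D ≤ M := by
    nlinarith [mul_nonneg (mul_nonneg hs₀ hM₀) (sq_nonneg q), mul_nonneg (mul_nonneg hs₀ hD) hq,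
      mul_nonneg (sub_nonneg.2 hs) hD]
  induction p using Nat.strong_induction_on generalizing n with
  | _ p ih =>
    match p with
    | 0 =>
      rw [add_zero, (hd.2.1 _ _).2 rfl]
      positivity
    | 1 => exact (h₁ n).trans (by gcongr)
    | 2 => exact (h₂ n).trans (by gcongr)
    | p + 3 =>
      have htail : d (x (n + 2)) (x (n + (p + 3))) ≤ M * q ^ (n + 2) := by
        simpa [show n + 2 + (p + 1) = n + (p + 3) by omega] using ih (p + 1) (by omega) (n + 2)
      calc d (x n) (x (n + (p + 3)))
          ≤ s * (d (x n) (x (n + 1)) + d (x (n + 1)) (x (n + 2))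
              + d (x (n + 2)) (x (n + (p + 3)))) :=
            hd.2.2.2 _ _ _ _ (hx.ne (by omega)) (hx.ne (by omega)) (hx.ne (by omega))
              (hx.ne (by omega)) (hx.ne (by omega))
        _ ≤ s * (D * q ^ n + D * q ^ (n + 1) + M * q ^ (n + 2)) := by
            gcongr s * ?_
            exact add_le_add_three (h₁ n) (h₁ (n + 1)) htail
        _ = M * q ^ n := by linear_combination q ^ n * hM

lemma dcauchy_of_geometric (hd : RectB d s) (hs : 1 ≤ s) {x : ℕ → X} (hx : Injective x)
    {q D : ℝ} (hq : 0 ≤ q) (hsq : s * q ^ 2 < 1)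
    (h₁ : ∀ n, d (x n) (x (n + 1)) ≤ D * q ^ n) (h₂ : ∀ n, d (x n) (x (n + 2)) ≤ D * q ^ n) :
    DCauchy d x := by
  have hq₁ : q < 1 := by nlinarith
  intro ε hε
  have hlim : Tendsto (fun n => s * D * (1 + q) / (1 - s * q ^ 2) * q ^ n) atTop (𝓝 0) := by
    simpa using (tendsto_pow_atTop_nhds_zero_of_lt_one hq hq₁).const_mul _
  obtain ⟨N, hN⟩ := (hlim.eventually (gt_mem_nhds hε)).exists_forall_of_atTop
  have hle : ∀ m n, N ≤ m → m ≤ n → d (x m) (x n) < ε := fun m n hm hmn => by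
    obtain ⟨p, rfl⟩ := Nat.exists_eq_add_of_le hmn
    exact (hd.dist_le_of_geometric hs hx hq hsq h₁ h₂ p m).trans_lt (hN m hm)
  refine ⟨N, fun m hm n hn => ?_⟩
  rcases le_total m n with h | h
  · exact hle m n hm h
  · rw [hd.2.2.1]
    exact hle n m hn h

lemma eq_of_convTo_of_convTo_succ (hd : RectB d s) {x : ℕ → X} (hx : Injective x) {a b : X}
    (ha : ConvTo d x a) (hb : ConvTo d (fun n => x (n + 1)) b)
    (hstep : Tendsto (fun n => d (x n) (x (n + 1))) atTop (𝓝 0)) : a = b := by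
  have hne : ∀ c, ∀ᶠ n in atTop, x n ≠ c := fun c => by
    rw [← Nat.cofinite_eq_atTop]
    exact hx.tendsto_cofinite.eventually (eventually_cofinite_ne c)
  have hlim : Tendsto (fun n => s * (d (x n) a + d (x n) (x (n + 1)) + d (x (n + 1)) b))
      atTop (𝓝 0) := by
    have ha' : Tendsto (fun n => d (x n) a) atTop (𝓝 0) := ha
    simpa using ((ha'.add hstep).add hb).const_mul s
  refine (hd.2.1 a b).1 (le_antisymm (ge_of_tendsto hlim ?_) (hd.1 a b))
  filter_upwards [hne a, hne b, (tendsto_add_atTop_nat 1).eventually (hne a),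
    (tendsto_add_atTop_nat 1).eventually (hne b)] with n hna hnb hna' hnb'
  rw [hd.2.2.1 (x n) a]
  exact hd.2.2.2 a b (x n) (x (n + 1)) (hx.ne (by omega)) hna hnb hna' hnb'

end RectB

section FixedPoint

variable {X : Type*} {d α η : X → X → ℝ} {s : ℝ} {T : X → X}

lemma dist_iterate_add_le (hadm : TriAdm T α η) (hs : 0 < s)
    (hcontr : ∀ x y, AERel α η x y → s ^ 2 * d (T x) (T y) ≤ d x y) {x₀ : X}
    (h₀ : AERel α η x₀ (T x₀)) {j : ℕ} (hj : 0 < j) (n : ℕ) :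
    d (T^[n] x₀) (T^[n + j] x₀) ≤ d x₀ (T^[j] x₀) * (s ^ 2)⁻¹ ^ n := by
  rw [iterate_add_apply, mul_comm]
  exact dist_iterate_le (by positivity) (fun _ _ => hadm.aeRel_apply) hcontr
    (hadm.aeRel_iterate_of_lt h₀ hj) n

lemma sq_mul_dist_le_of_theta_contraction (hd : RectB d s) (hs : 0 < s) {θ : ℝ → ℝ}
    (hθ : IsTheta θ) {k : ℝ} (hk : k < 1)
    (hcontr : ∀ x y, AERel α η x y → 0 < d (T x) (T y) →
      θ (s ^ 2 * d (T x) (T y)) ≤ (θ (d x y)) ^ k)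
    (x y : X) (hxy : AERel α η x y) : s ^ 2 * d (T x) (T y) ≤ d x y := by
  rcases (hd.1 (T x) (T y)).eq_or_lt with h₀ | hpos
  · rw [← h₀, mul_zero]
    exact hd.1 x y
  have hxy' : 0 < d x y := (hd.1 x y).lt_of_ne fun h => hpos.ne' <| by
    rw [(hd.2.1 x y).1 h.symm, (hd.2.1 _ _).2 rfl]
  exact (hθ.lt_of_le_rpow hk (mul_pos (by positivity) hpos) hxy' (hcontr x y hxy hpos)).le

theorem exists_fixedPoint_of_sq_mul_dist_le (hd : RectB d s) (hs : 1 < s)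
    (hcomp : AEComplete d α η) (hadm : TriAdm T α η) (hTc : AEContinuous d α η T) {x₀ : X}
    (h₀ : AERel α η x₀ (T x₀))
    (hcontr : ∀ x y, AERel α η x y → s ^ 2 * d (T x) (T y) ≤ d x y) : ∃ z, T z = z := by
  set x : ℕ → X := fun n => T^[n] x₀ with hx
  by_cases hfix : ∃ n, x n = x (n + 1)
  · obtain ⟨n, hn⟩ := hfix
    exact ⟨x n, by simpa only [hx, iterate_succ_apply'] using hn.symm⟩
  push Not at hfix
  have hs₂ : 1 < s ^ 2 := by nlinarith
  have hrel : ∀ n, AERel α η (x n) (x (n + 1)) := fun n =>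
    hadm.aeRel_iterate_of_lt h₀ n.lt_succ_self
  have hpos : ∀ n, 0 < d (x n) (x (n + 1)) := fun n =>
    (hd.1 _ _).lt_of_ne fun h => hfix n ((hd.2.1 _ _).1 h.symm)
  have hanti : StrictAnti fun n => d (x n) (x (n + 1)) := strictAnti_nat_of_succ_lt fun n => by
    have := hcontr _ _ (hrel n)
    simp only [hx, ← iterate_succ_apply' T] at this
    nlinarith [hpos (n + 1)]
  have hinj : Injective x := injective_iterate_of_strictAnti hanti
  set D := d x₀ (T^[1] x₀) + d x₀ (T^[2] x₀)
  have h₁ : ∀ n, d (x n) (x (n + 1)) ≤ D * (s ^ 2)⁻¹ ^ n := fun n =>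
    (dist_iterate_add_le hadm (by linarith) hcontr h₀ one_pos n).trans
      (by gcongr; exact le_add_of_nonneg_right (hd.1 _ _))
  have h₂ : ∀ n, d (x n) (x (n + 2)) ≤ D * (s ^ 2)⁻¹ ^ n := fun n =>
    (dist_iterate_add_le hadm (by linarith) hcontr h₀ two_pos n).trans
      (by gcongr; exact le_add_of_nonneg_left (hd.1 _ _))
  have hsq : s * ((s ^ 2)⁻¹) ^ 2 < 1 := by
    rw [inv_pow, ← pow_mul, mul_inv_lt_iff₀ (by positivity), one_mul]
    simpa using pow_lt_pow_right₀ hs (show 1 < 2 * 2 by norm_num)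
  obtain ⟨a, ha⟩ := hcomp x hrel
    (hd.dcauchy_of_geometric hs.le hinj (by positivity) hsq h₁ h₂)
  have hTa : ConvTo d (fun n => x (n + 1)) (T a) := by
    simpa only [hx, iterate_succ_apply'] using hTc x a hrel ha
  have hstep : Tendsto (fun n => d (x n) (x (n + 1))) atTop (𝓝 0) :=
    squeeze_zero (fun n => hd.1 _ _) h₁ (by
      simpa using (tendsto_pow_atTop_nhds_zero_of_lt_one (by positivity)
        (inv_lt_one_of_one_lt₀ hs₂)).const_mul D)
  exact ⟨a, (hd.eq_of_convTo_of_convTo_succ hinj ha hTa hstep).symm⟩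

lemma eq_of_fixedPoints_of_sq_mul_dist_le (hd : RectB d s) (hs : 1 < s)
    (hcontr : ∀ x y, AERel α η x y → s ^ 2 * d (T x) (T y) ≤ d x y) {z u : X}
    (hzu : AERel α η z u) (hz : T z = z) (hu : T u = u) : z = u := by
  have h := hcontr z u hzu
  rw [hz, hu] at h
  have hs₂ : 1 < s ^ 2 := by nlinarith
  exact (hd.2.1 z u).1 (by nlinarith [hd.1 z u])

end FixedPoint

theorem stmt8_general {X : Type*} (d α η : X → X → ℝ) (s : ℝ) (hs : 1 < s)
    (hd : RectB d s)
    (hcomp : AEComplete d α η) (T : X → X)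
    (θ : ℝ → ℝ) (hθ : IsTheta θ) (k : ℝ) (hk1 : k < 1)
    (hadm : TriAdm T α η) (hTc : AEContinuous d α η T)
    (hx₀ : ∃ x₀, 1 ≤ α x₀ (T x₀) ∨ η x₀ (T x₀) ≤ 1)
    (hcontr : ∀ x y, (1 ≤ α x y ∨ η x y ≤ 1) → 0 < d (T x) (T y) →
      θ (s ^ 2 * d (T x) (T y)) ≤ (θ (d x y)) ^ k) :
    (∃ z, T z = z) ∧
    ((∀ z u, T z = z → T u = u → 1 ≤ α z u ∨ η z u ≤ 1) → ∃! z, T z = z) := by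
  have hcontr' := sq_mul_dist_le_of_theta_contraction hd (by linarith) hθ hk1 hcontr
  obtain ⟨x₀, h₀⟩ := hx₀
  have hex := exists_fixedPoint_of_sq_mul_dist_le hd hs hcomp hadm hTc h₀ hcontr'
  refine ⟨hex, fun hall => ?_⟩
  obtain ⟨z, hz⟩ := hex
  exact ⟨z, hz, fun u hu =>
    eq_of_fixedPoints_of_sq_mul_dist_le hd hs hcontr' (hall u z hu hz) hu hz⟩

theorem stmt8 {X : Type*} (d α η : X → X → ℝ) (s : ℝ) (hs : 1 < s)
    (hd : RectB d s) (hα : ∀ x y, 0 ≤ α x y) (hη : ∀ x y, 0 ≤ η x y)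
    (hcomp : AEComplete d α η) (T : X → X)
    (θ : ℝ → ℝ) (hθ : IsTheta θ) (k : ℝ) (hk0 : 0 < k) (hk1 : k < 1)
    (hadm : TriAdm T α η) (hTc : AEContinuous d α η T)
    (hx₀ : ∃ x₀, 1 ≤ α x₀ (T x₀) ∨ η x₀ (T x₀) ≤ 1)
    (hcontr : ∀ x y, (1 ≤ α x y ∨ η x y ≤ 1) → 0 < d (T x) (T y) →
      θ (s ^ 2 * d (T x) (T y)) ≤ (θ (d x y)) ^ k) :
    (∃ z, T z = z) ∧
    ((∀ z u, T z = z → T u = u → 1 ≤ α z u ∨ η z u ≤ 1) → ∃! z, T z = z) :=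
  stmt8_general d α η s hs hd hcomp T θ hθ k hk1 hadm hTc hx₀ hcontr
end

section
/- Let (X,d) be an (α,η)-complete rectangular b-metric space with s > 1, and T : X → X triangular (α,η)-admissible, (α,η)-continuous, with a point x₀ satisfying α(x₀,Tx₀) ≥ 1 or η(x₀,Tx₀) ≤ 1. If T is an (α,η)-θ-φ-Reich-type contraction, i.e., there exist θ ∈ Θ and φ ∈ Φ such that θ(s²d(Tx,Ty)) ≤ φ[θ((d(x,y)+d(Tx,x)+d(Ty,y))/(3s))] whenever (α(x,y) ≥ 1 or η(x,y) ≤ 1) and Tx ≠ Ty, then T has a fixed point, unique when α(x,y) ≥ 1 or η(x,y) ≤ 1 for all x,y ∈ X. -/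
open Filter Topology

theorem stmt10 {X : Type*} (d α η : X → X → ℝ) (s : ℝ) (hs : 1 < s)
    (hd : RectB d s) (hα : ∀ x y, 0 ≤ α x y) (hη : ∀ x y, 0 ≤ η x y)
    (hcomp : AEComplete d α η) (T : X → X)
    (θ φ : ℝ → ℝ) (hθ : IsTheta θ) (hφ : IsPhi φ)
    (hadm : TriAdm T α η) (hTc : AEContinuous d α η T)
    (hx₀ : ∃ x₀, 1 ≤ α x₀ (T x₀) ∨ η x₀ (T x₀) ≤ 1)
    (hcontr : ∀ x y, (1 ≤ α x y ∨ η x y ≤ 1) → T x ≠ T y →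
      θ (s ^ 2 * d (T x) (T y)) ≤
        φ (θ ((d x y + d (T x) x + d (T y) y) / (3 * s)))) :
    (∃ z, T z = z) ∧
    ((∀ x y, 1 ≤ α x y ∨ η x y ≤ 1) → ∃! z, T z = z) := by
  obtain ⟨hposd, heqd, hsymm, hrect⟩ := hd
  have hs0 : (0:ℝ) < s := lt_trans one_pos hs
  have hs3 : (1:ℝ) < s^3 := by nlinarith [mul_pos (sub_pos.mpr hs) (mul_pos hs0 hs0), hs, hs0, sq_nonneg s, mul_pos hs0 hs0]
  -- φ t < t for t > 1
  have hφlt : ∀ t, 1 < t → φ t < t := by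
    intro t ht
    by_contra hcon
    push_neg at hcon
    have hiter : ∀ n, t ≤ φ^[n] t := by
      intro n
      induction n with
      | zero => simp
      | succ n ih =>
        rw [Function.iterate_succ_apply']
        exact le_trans hcon (hφ.2.1 (Set.mem_Ici.mpr ht.le)
          (Set.mem_Ici.mpr (le_trans ht.le ih)) ih)
    have hlim := hφ.2.2.2 t ht
    have := ge_of_tendsto hlim (Filter.Eventually.of_forall hiter)
    linarith
  -- key contraction consequence
  have hkey : ∀ x y, (1 ≤ α x y ∨ η x y ≤ 1) → T x ≠ T y →
      3*s^3 * d (T x) (T y) < d x y + d (T x) x + d (T y) y := by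
    intro x y hR hne
    have hxy : x ≠ y := fun h => hne (congrArg T h)
    have hdxy : 0 < d x y := lt_of_le_of_ne (hposd x y) (fun h => hxy ((heqd x y).1 h.symm))
    have hdT : 0 < d (T x) (T y) :=
      lt_of_le_of_ne (hposd _ _) (fun h => hne ((heqd _ _).1 h.symm))
    have hApos : 0 < d x y + d (T x) x + d (T y) y := by
      have := hposd (T x) x
      have := hposd (T y) y
      linarith
    have hA3 : 0 < (d x y + d (T x) x + d (T y) y) / (3*s) :=
      div_pos hApos (by linarith)
    have h1 := hcontr x y hR hne
    have h2 : θ (s^2 * d (T x) (T y)) < θ ((d x y + d (T x) x + d (T y) y)/(3*s)) :=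
      lt_of_le_of_lt h1 (hφlt _ (hθ.1 _ hA3))
    have h4 : s^2 * d (T x) (T y) < (d x y + d (T x) x + d (T y) y)/(3*s) := by
      by_contra hle
      push_neg at hle
      exact absurd h2 (not_lt.mpr (((hθ.2.1).le_iff_le (Set.mem_Ioi.mpr hA3)
        (Set.mem_Ioi.mpr (mul_pos (pow_pos hs0 2) hdT))).mpr hle))
    rw [lt_div_iff₀ (by linarith : (0:ℝ) < 3*s)] at h4
    calc 3*s^3 * d (T x) (T y) = s^2 * d (T x) (T y) * (3*s) := by ring
      _ < _ := h4
  -- set up the orbit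
  obtain ⟨x₀, hx0⟩ := hx₀
  obtain ⟨R, hR0, hRT, hRtrans, hRsub⟩ : ∃ R : X → X → Prop,
      R x₀ (T x₀) ∧ (∀ x y, R x y → R (T x) (T y)) ∧
      (∀ x y z, R x y → R y z → R x z) ∧
      (∀ x y, R x y → (1 ≤ α x y ∨ η x y ≤ 1)) := by
    rcases hx0 with h | h
    · exact ⟨fun x y => 1 ≤ α x y, h, hadm.1, fun a b c => hadm.2.2.1 a b c,
        fun _ _ => Or.inl⟩
    · exact ⟨fun x y => η x y ≤ 1, h, hadm.2.1, fun a b c => hadm.2.2.2 a b c,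
        fun _ _ => Or.inr⟩
  set x : ℕ → X := fun n => T^[n] x₀ with hxdef
  have hTx : ∀ n, x (n+1) = T (x n) := fun n => Function.iterate_succ_apply' T n x₀
  have hRx : ∀ n, R (x n) (x (n+1)) := by
    intro n
    induction n with
    | zero => simpa [hxdef] using hR0
    | succ n ih =>
      have h := hRT _ _ ih
      rwa [← hTx n, ← hTx (n+1)] at h
  have hbranch : ∀ n, 1 ≤ α (x n) (x (n+1)) ∨ η (x n) (x (n+1)) ≤ 1 :=
    fun n => hRsub _ _ (hRx n)
  have hRlt : ∀ m n, m < n → R (x m) (x n) := by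
    intro m n h
    induction n with
    | zero => omega
    | succ n ih =>
      rcases Nat.lt_succ_iff_lt_or_eq.mp h with h' | h'
      · exact hRtrans _ _ _ (ih h') (hRx n)
      · rw [h']; exact hRx n
  have hex : ∃ z, T z = z := by
    by_cases hfp : ∃ n, T (x n) = x n
    · obtain ⟨n, hn⟩ := hfp; exact ⟨x n, hn⟩
    push_neg at hfp
    have hne1 : ∀ n, x (n+1) ≠ x n := by
      intro n
      rw [hTx n]
      exact hfp n
    obtain ⟨dq, hdqn⟩ : ∃ dq : ℕ → ℝ, ∀ n, dq n = d (x n) (x (n+1)) :=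
      ⟨_, fun _ => rfl⟩
    have hdqpos : ∀ n, 0 < dq n := by
      intro n
      rw [hdqn]
      exact lt_of_le_of_ne (hposd _ _) (fun h => hne1 n (((heqd _ _).mp h.symm).symm))
    have hstep : ∀ n, dq (n+1) * (3*s^3 - 1) < 2 * dq n := by
      intro n
      have hTne : T (x n) ≠ T (x (n+1)) := by
        rw [← hTx n, ← hTx (n+1)]
        exact fun h => hne1 (n+1) h.symm
      have h := hkey (x n) (x (n+1)) (hRsub _ _ (hRx n)) hTne
      rw [← hTx n, ← hTx (n+1)] at h
      rw [hsymm (x (n+1)) (x n), hsymm (x (n+1+1)) (x (n+1))] at h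
      rw [hdqn, hdqn]
      linarith [h]
    have hmono : ∀ n, dq (n+1) < dq n := by
      intro n
      have h2 : dq (n+1) * 2 < dq (n+1) * (3*s^3-1) :=
        mul_lt_mul_of_pos_left (by nlinarith [hs3]) (hdqpos (n+1))
      nlinarith [hstep n]
    have hanti : ∀ m n, m < n → dq n < dq m :=
      fun m n h => strictAnti_nat_of_succ_lt hmono h
    have hinj : ∀ m n, m < n → x m ≠ x n := by
      intro m n h hxe
      have h1 : x (m+1) = x (n+1) := by rw [hTx, hTx, hxe]
      have h2 : dq m = dq n := by rw [hdqn, hdqn, hxe, h1]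
      have := hanti m n h
      linarith
    set k : ℝ := 2/(3*s^3-1) with hkdef
    have h3s1 : (0:ℝ) < 3*s^3 - 1 := by nlinarith [hs3]
    have hkid : k * (3*s^3-1) = 2 := by rw [hkdef]; field_simp
    have hk0 : 0 < k := by rw [hkdef]; positivity
    have hk1 : k < 1 := by rw [hkdef, div_lt_one h3s1]; nlinarith [hs3]
    have hstepk : ∀ n, dq (n+1) ≤ k * dq n := by
      intro n
      have e : k * dq n * (3*s^3-1) = 2 * dq n := by rw [mul_right_comm, hkid]
      have h2 : dq (n+1) * (3*s^3-1) ≤ k * dq n * (3*s^3-1) := by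
        rw [e]; exact (hstep n).le
      exact le_of_mul_le_mul_right h2 h3s1
    have hdqk : ∀ n, dq n ≤ dq 0 * k^n := by
      intro n
      induction n with
      | zero => simp
      | succ n ih =>
        calc dq (n+1) ≤ k * dq n := hstepk n
          _ ≤ k * (dq 0 * k^n) := mul_le_mul_of_nonneg_left ih hk0.le
          _ = dq 0 * k^(n+1) := by ring
    obtain ⟨dq2, hdq2n⟩ : ∃ dq2 : ℕ → ℝ, ∀ n, dq2 n = d (x n) (x (n+2)) :=
      ⟨_, fun _ => rfl⟩
    have hstep2 : ∀ n, dq2 (n+1) * (3*s^3) ≤ dq2 n + 2 * dq n := by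
      intro n
      have hTne : T (x n) ≠ T (x (n+2)) := by
        rw [← hTx n, ← hTx (n+2)]
        exact hinj (n+1) (n+2+1) (by omega)
      have h := hkey (x n) (x (n+2)) (hRsub _ _ (hRlt n (n+2) (by omega))) hTne
      rw [← hTx n, ← hTx (n+2)] at h
      rw [hsymm (x (n+1)) (x n), hsymm (x (n+2+1)) (x (n+2))] at h
      have e1 : n+2+1 = n+3 := rfl
      rw [e1] at h
      have hle : dq (n+2) ≤ dq n := (hanti n (n+2) (by omega)).le
      rw [hdqn, hdqn] at hle
      have e2 : n+2+1 = n+3 := rfl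
      rw [e2] at hle
      rw [hdq2n, hdq2n, hdqn]
      have e3 : n+1+2 = n+3 := rfl
      rw [e3]
      linarith [h, hle]
    set B : ℝ := max (dq2 0) (2*dq 0/(3*s^3*k - 1)) with hBdef
    have h3k1 : (0:ℝ) < 3*s^3*k - 1 := by nlinarith [hkid, hk0]
    have hB1 : dq2 0 ≤ B := le_max_left _ _
    have hB2 : 2*dq 0 ≤ B*(3*s^3*k-1) := by
      have h := le_max_right (dq2 0) (2*dq 0/(3*s^3*k - 1))
      rw [← hBdef] at h
      exact (div_le_iff₀ h3k1).mp h
    have hdq2k : ∀ n, dq2 n ≤ B * k^n := by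
      intro n
      induction n with
      | zero => simpa using hB1
      | succ n ih =>
        have h1 := hstep2 n
        have h2 : dq n ≤ dq 0 * k^n := hdqk n
        have hkn : (0:ℝ) ≤ k^n := pow_nonneg hk0.le n
        have h3 : dq2 (n+1) * (3*s^3) ≤ (B + 2*dq 0) * k^n := by
          calc dq2 (n+1)*(3*s^3) ≤ dq2 n + 2*dq n := h1
            _ ≤ B*k^n + 2*(dq 0 * k^n) := by linarith [ih, h2]
            _ = (B + 2*dq 0)*k^n := by ring
        have h4 : (B + 2*dq 0) * k^n ≤ (B*(3*s^3*k))*k^n := by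
          apply mul_le_mul_of_nonneg_right _ hkn
          linarith [hB2]
        have h5 : dq2 (n+1) * (3*s^3) ≤ (B*k^(n+1))*(3*s^3) := by
          have e : (B*(3*s^3*k))*k^n = (B*k^(n+1))*(3*s^3) := by ring
          linarith [h3, h4, e.le, e.ge]
        exact le_of_mul_le_mul_right h5 (by positivity)
    set D : ℝ := max (dq 0) B with hDdef
    have hdqD : ∀ n, dq n ≤ D*k^n := fun n =>
      le_trans (hdqk n) (mul_le_mul_of_nonneg_right (le_max_left _ _) (pow_nonneg hk0.le n))
    have hdq2D : ∀ n, dq2 n ≤ D*k^n := fun n =>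
      le_trans (hdq2k n) (mul_le_mul_of_nonneg_right (le_max_right _ _) (pow_nonneg hk0.le n))
    have hD0 : 0 ≤ D := le_trans (hdqpos 0).le (le_max_left _ _)
    have h2s : 2*s < 3*s^3 - 1 := by
      nlinarith [mul_pos (sub_pos.mpr hs) (show (0:ℝ) < 3*s^2+3*s+1 by positivity)]
    have hsk : s*k < 1 := by
      have h := mul_lt_mul_of_pos_left h2s hk0
      nlinarith [hkid]
    have hsk2 : s*k^2 < 1 := by
      nlinarith [mul_pos (sub_pos.mpr hsk) hk0, hk1]
    set E : ℝ := max D (s*(D + D*k)/(1 - s*k^2)) with hEdef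
    have hDE : D ≤ E := le_max_left _ _
    have hE0 : 0 ≤ E := le_trans hD0 hDE
    have hEkey : s*(D + D*k + E*k^2) ≤ E := by
      have h := le_max_right D (s*(D + D*k)/(1 - s*k^2))
      rw [← hEdef, div_le_iff₀ (by linarith)] at h
      nlinarith [h]
    -- general bound
    have hEb : ∀ g m n, n = m + g + 1 → d (x m) (x n) ≤ E * k^m := by
      intro g
      induction g using Nat.strong_induction_on with
      | _ g ih =>
        intro m n hn
        rcases g with _ | (_ | g)
        · have h' : n = m+1 := by omega
          subst h'
          have hh := hdqD m
          rw [hdqn] at hh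
          calc d (x m) (x (m+1)) ≤ D * k^m := hh
            _ ≤ E * k^m := mul_le_mul_of_nonneg_right hDE (pow_nonneg hk0.le m)
        · have h' : n = m+2 := by omega
          subst h'
          have hh := hdq2D m
          rw [hdq2n] at hh
          calc d (x m) (x (m+2)) ≤ D * k^m := hh
            _ ≤ E * k^m := mul_le_mul_of_nonneg_right hDE (pow_nonneg hk0.le m)
        · have h' : n = (m+2) + g + 1 := by omega
          subst h'
          have hih : d (x (m+2)) (x ((m+2)+g+1)) ≤ E * k^(m+2) :=
            ih g (by omega) (m+2) ((m+2)+g+1) rfl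
          have hrb := hrect (x m) (x ((m+2)+g+1)) (x (m+1)) (x (m+2))
            (hinj (m+1) (m+2) (by omega)) (hinj m (m+1) (by omega)).symm
            (hinj (m+1) ((m+2)+g+1) (by omega)) (hinj m (m+2) (by omega)).symm
            (hinj (m+2) ((m+2)+g+1) (by omega))
          have hd1 : d (x m) (x (m+1)) ≤ D * k^m := by
            have := hdqD m; rwa [hdqn] at this
          have hd2 : d (x (m+1)) (x (m+2)) ≤ D * (k^m * k) := by
            have h := hdqD (m+1)
            rw [hdqn] at h
            have e : m+1+1 = m+2 := rfl
            rw [e, pow_succ] at h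
            exact h
          have hd3 : d (x (m+2)) (x ((m+2)+g+1)) ≤ E * (k^m * k^2) := by
            rw [← pow_add]
            exact hih
          calc d (x m) (x ((m+2)+g+1))
              ≤ s * (d (x m) (x (m+1)) + d (x (m+1)) (x (m+2)) +
                  d (x (m+2)) (x ((m+2)+g+1))) := hrb
            _ ≤ s * (D*k^m + D*(k^m*k) + E*(k^m*k^2)) := by
                apply mul_le_mul_of_nonneg_left _ hs0.le
                linarith [hd1, hd2, hd3]
            _ = k^m * (s*(D + D*k + E*k^2)) := by ring
            _ ≤ k^m * E := mul_le_mul_of_nonneg_left hEkey (pow_nonneg hk0.le m)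
            _ = E * k^m := mul_comm _ _
    have hE' : ∀ m n, m < n → d (x m) (x n) ≤ E * k^m :=
      fun m n h => hEb (n - m - 1) m n (by omega)
    have htd : Tendsto (fun n => E * k^n) atTop (𝓝 0) := by
      have := (tendsto_pow_atTop_nhds_zero_of_lt_one hk0.le hk1).const_mul E
      simpa using this
    have hcau : DCauchy d x := by
      intro ε hε
      obtain ⟨N, hN⟩ := eventually_atTop.mp (htd.eventually_lt_const hε)
      refine ⟨N, fun m hm n hn => ?_⟩
      rcases lt_trichotomy m n with h | h | h
      · calc d (x m) (x n) ≤ E*k^m := hE' m n h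
          _ ≤ E*k^N := mul_le_mul_of_nonneg_left
              (pow_le_pow_of_le_one hk0.le hk1.le hm) hE0
          _ < ε := hN N le_rfl
      · rw [h, (heqd _ _).mpr rfl]; exact hε
      · rw [hsymm]
        calc d (x n) (x m) ≤ E*k^n := hE' n m h
          _ ≤ E*k^N := mul_le_mul_of_nonneg_left
              (pow_le_pow_of_le_one hk0.le hk1.le hn) hE0
          _ < ε := hN N le_rfl
    obtain ⟨a, ha⟩ := hcomp x hbranch hcau
    have ha' : Tendsto (fun n => d (x n) a) atTop (𝓝 0) := ha
    have hconvT : Tendsto (fun n => d (T (x n)) (T a)) atTop (𝓝 0) := hTc x a hbranch ha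
    by_cases hTa : T a = a
    · exact ⟨a, hTa⟩
    exfalso
    have hav : ∀ b : X, ∃ N, ∀ n ≥ N, x n ≠ b := by
      intro b
      by_contra hcon
      push_neg at hcon
      obtain ⟨n₁, _, h1⟩ := hcon 0
      obtain ⟨n₂, hge, h2⟩ := hcon (n₁+1)
      exact hinj n₁ n₂ (by omega) (h1.trans h2.symm)
    have haTa : a ≠ T a := fun h => hTa h.symm
    have hδ : 0 < d a (T a) :=
      lt_of_le_of_ne (hposd _ _) (fun h => haTa ((heqd _ _).mp h.symm))
    have hδ' : 0 < d a (T a)/(6*s) := by positivity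
    obtain ⟨N₁, hN₁⟩ := hav a
    obtain ⟨N₂, hN₂⟩ := hav (T a)
    have hdq0 : Tendsto (fun n => d (x n) (x (n+1))) atTop (𝓝 0) := by
      apply squeeze_zero (fun n => hposd _ _) _ htd
      intro n
      have h := le_trans (hdqD n) (mul_le_mul_of_nonneg_right hDE (pow_nonneg hk0.le n))
      rwa [hdqn] at h
    have ev1 := ha'.eventually_lt_const hδ'
    have ev2 := hdq0.eventually_lt_const hδ'
    have ev3 := hconvT.eventually_lt_const hδ'
    have ev4 : ∀ᶠ n : ℕ in atTop, n ≥ max N₁ N₂ := eventually_ge_atTop _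
    obtain ⟨n, ⟨⟨e1, e2⟩, e3, en⟩⟩ := ((ev1.and ev2).and (ev3.and ev4)).exists
    have hrb := hrect a (T a) (x n) (x (n+1))
      (hinj n (n+1) (by omega))
      (hN₁ n (by omega)) (hN₂ n (by omega))
      (hN₁ (n+1) (by omega)) (hN₂ (n+1) (by omega))
    rw [hsymm a (x n)] at hrb
    have eT : d (x (n+1)) (T a) = d (T (x n)) (T a) := by rw [hTx n]
    rw [eT] at hrb
    have hlt : s * (d (x n) a + d (x n) (x (n+1)) + d (T (x n)) (T a)) <
        s * (3*(d a (T a)/(6*s))) :=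
      mul_lt_mul_of_pos_left (by linarith [e1, e2, e3]) hs0
    have he : s*(3*(d a (T a)/(6*s))) = d a (T a)/2 := by
      field_simp
      ring
    linarith [hrb, hlt, he.le, he.ge, hδ]
  refine ⟨hex, ?_⟩
  intro hall
  obtain ⟨z, hz⟩ := hex
  refine ⟨z, hz, ?_⟩
  intro w hw
  by_contra hne
  have hTne : T w ≠ T z := by rw [hw, hz]; exact hne
  have h := hkey w z (hall w z) hTne
  rw [hw, hz] at h
  have h0 : d w w = 0 := (heqd w w).mpr rfl
  have h0' : d z z = 0 := (heqd z z).mpr rfl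
  have hdwz : 0 < d w z := lt_of_le_of_ne (hposd _ _) (fun hh => hne ((heqd _ _).mp hh.symm))
  nlinarith [h, h0, h0', mul_pos hdwz (show (0:ℝ) < 3*s^3 - 1 by nlinarith [hs3])]
end

section
/- Let s ≥ 1 and λ ∈ (0, 1/(3s)). If s²·d(Tx,Ty) ≤ λ[d(x,y)+d(Tx,x)+d(Ty,y)] for all (admissible) x,y with Tx ≠ Ty, then with θ(t) = e^t and φ(t) = t^{3sλ}, T satisfies θ(s²d(Tx,Ty)) ≤ φ[θ((d(x,y)+d(Tx,x)+d(Ty,y))/(3s))] for such x,y; that is, every Reich-type mapping is a θ-φ-Reich-type contraction. -/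
open Filter Topology

theorem Real.exp_div_rpow_mul {c : ℝ} (hc : c ≠ 0) (b l : ℝ) :
    Real.exp (b / c) ^ (c * l) = Real.exp (l * b) := by
  rw [← Real.exp_mul]
  congr 1
  field_simp

theorem stmt12_general {X : Type*} (d α η : X → X → ℝ) (s : ℝ) (hs : 1 ≤ s)
    (T : X → X) (l : ℝ)
    (hR : ∀ x y, (1 ≤ α x y ∨ η x y ≤ 1) → T x ≠ T y →
      s ^ 2 * d (T x) (T y) ≤ l * (d x y + d (T x) x + d (T y) y)) :
    ∀ x y, (1 ≤ α x y ∨ η x y ≤ 1) → T x ≠ T y →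
      Real.exp (s ^ 2 * d (T x) (T y)) ≤
        (Real.exp ((d x y + d (T x) x + d (T y) y) / (3 * s))) ^ (3 * s * l) := by
  intro x y hadm hne
  rw [Real.exp_div_rpow_mul (by positivity), Real.exp_le_exp]
  exact hR x y hadm hne

theorem stmt12 {X : Type*} (d α η : X → X → ℝ) (s : ℝ) (hs : 1 ≤ s)
    (hd : RectB d s) (T : X → X) (l : ℝ) (hl0 : 0 < l) (hl : l < 1 / (3 * s))
    (hR : ∀ x y, (1 ≤ α x y ∨ η x y ≤ 1) → T x ≠ T y →
      s ^ 2 * d (T x) (T y) ≤ l * (d x y + d (T x) x + d (T y) y)) :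
    ∀ x y, (1 ≤ α x y ∨ η x y ≤ 1) → T x ≠ T y →
      Real.exp (s ^ 2 * d (T x) (T y)) ≤
        (Real.exp ((d x y + d (T x) x + d (T y) y) / (3 * s))) ^ (3 * s * l) :=
  stmt12_general d α η s hs T l hR
end

section
/- Let X = A ∪ B where A = {1/n : n ∈ {2,3,4,5,6,7}} and B = [1,2], with d symmetric, d(x,y) = 0 iff x = y, with the special values d(1/2,1/3)=d(1/4,1/5)=d(1/6,1/7)=0.05, d(1/2,1/4)=d(1/3,1/7)=d(1/5,1/6)=0.08, d(1/2,1/6)=d(1/3,1/4)=d(1/5,1/7)=0.4, d(1/2,1/5)=d(1/3,1/6)=d(1/4,1/7)=0.24, d(1/2,1/7)=d(1/3,1/5)=d(1/4,1/6)=0.15, and d(x,y) = |x−y|² otherwise. Then (X,d) is a rectangular b-metric space with coefficient s = 3, but it is not a metric space, not a b-metric space with coefficient s = 3, and not a rectangular metric space. -/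
open Filter Topology

open scoped Classical in
noncomputable def exD15 : ℝ → ℝ → ℝ := fun x y =>
  if x = y then 0
  else if ({x, y} : Set ℝ) = {1/2, 1/3} ∨ ({x, y} : Set ℝ) = {1/4, 1/5} ∨
          ({x, y} : Set ℝ) = {1/6, 1/7} then 0.05
  else if ({x, y} : Set ℝ) = {1/2, 1/4} ∨ ({x, y} : Set ℝ) = {1/3, 1/7} ∨
          ({x, y} : Set ℝ) = {1/5, 1/6} then 0.08
  else if ({x, y} : Set ℝ) = {1/2, 1/6} ∨ ({x, y} : Set ℝ) = {1/3, 1/4} ∨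
          ({x, y} : Set ℝ) = {1/5, 1/7} then 0.4
  else if ({x, y} : Set ℝ) = {1/2, 1/5} ∨ ({x, y} : Set ℝ) = {1/3, 1/6} ∨
          ({x, y} : Set ℝ) = {1/4, 1/7} then 0.24
  else if ({x, y} : Set ℝ) = {1/2, 1/7} ∨ ({x, y} : Set ℝ) = {1/3, 1/5} ∨
          ({x, y} : Set ℝ) = {1/4, 1/6} then 0.15
  else |x - y| ^ 2

noncomputable abbrev X15 : Set ℝ :=
  ({1/2, 1/3, 1/4, 1/5, 1/6, 1/7} : Set ℝ) ∪ Set.Icc 1 2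

/-!
Off the six points of `A15` the distance is `|x - y| ^ 2`, which satisfies the rectangle inequality
with coefficient 3 because `(a + b + c) ^ 2 ≤ 3 (a ^ 2 + b ^ 2 + c ^ 2)`, and every special value
dominates `|x - y| ^ 2`. When both ends lie in `A15` the distance is at most `2/5`, while each of the
three legs of a detour is at least `1/20`, and at least `1/4` as soon as it reaches `[1, 2]`; since
`3 · 3/20 ≥ 2/5` this suffices. The special values are arranged so that `1/5, 1/6, 1/7` violate the
b-triangle inequality with coefficient 3 and `1/2, 1/3, 1/7, 1/6` the rectangle inequality with
coefficient 1.
-/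

theorem dist_sq_le_three_mul_add {α : Type*} [PseudoMetricSpace α] (x u v y : α) :
    dist x y ^ 2 ≤ 3 * (dist x u ^ 2 + dist u v ^ 2 + dist v y ^ 2) := by
  have htri := dist_triangle4 x u v y
  have := dist_nonneg (x := x) (y := y)
  nlinarith [sq_nonneg (dist x u - dist u v), sq_nonneg (dist u v - dist v y),
    sq_nonneg (dist x u - dist v y)]

def A15 : Set ℝ := {1/2, 1/3, 1/4, 1/5, 1/6, 1/7}

theorem mem_X15 {x : ℝ} : x ∈ X15 ↔ x ∈ A15 ∨ x ∈ Set.Icc 1 2 := Iff.rfl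

theorem le_half_of_mem_A15 {x : ℝ} (hx : x ∈ A15) : x ≤ 1/2 := by
  simp only [A15, Set.mem_insert_iff, Set.mem_singleton_iff] at hx
  rcases hx with rfl | rfl | rfl | rfl | rfl | rfl <;> norm_num

theorem exD15_comm (x y : ℝ) : exD15 x y = exD15 y x := by
  unfold exD15
  rw [Set.pair_comm y x, abs_sub_comm y x]
  simp only [eq_comm (a := y)]

theorem exD15_nonneg (x y : ℝ) : 0 ≤ exD15 x y := by
  unfold exD15
  split_ifs <;> positivity

theorem exD15_eq_zero {x y : ℝ} : exD15 x y = 0 ↔ x = y := by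
  by_cases h : x = y
  · simp [exD15, h]
  · unfold exD15
    split_ifs <;> norm_num [sub_eq_zero, h]

theorem sq_abs_sub_le_exD15 (x y : ℝ) : |x - y| ^ 2 ≤ exD15 x y := by
  unfold exD15
  split_ifs with hxy
  · simp [hxy]
  all_goals first
    | exact le_rfl
    | rcases ‹_ ∨ _ ∨ _› with h | h | h <;> rw [Set.pair_eq_pair_iff] at h <;>
        rcases h with ⟨rfl, rfl⟩ | ⟨rfl, rfl⟩ <;> rw [sq_abs] <;> norm_num

theorem exD15_of_one_le {x : ℝ} (hx : 1 ≤ x) (y : ℝ) : exD15 x y = |x - y| ^ 2 := by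
  unfold exD15
  split_ifs with hxy
  · simp [hxy]
  all_goals first
    | rfl
    | rcases ‹_ ∨ _ ∨ _› with h | h | h <;> rw [Set.pair_eq_pair_iff] at h <;>
        rcases h with ⟨rfl, rfl⟩ | ⟨rfl, rfl⟩ <;> norm_num at hx

theorem quarter_le_exD15 {x y : ℝ} (hx : x ∈ A15) (hy : 1 ≤ y) : 1/4 ≤ exD15 x y := by
  have hx' := le_half_of_mem_A15 hx
  rw [exD15_comm, exD15_of_one_le hy, sq_abs]
  nlinarith

theorem exD15_mem_Icc_of_mem_A15 {x y : ℝ} (hx : x ∈ A15) (hy : y ∈ A15) (hxy : x ≠ y) :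
    exD15 x y ∈ Set.Icc (1/20) (2/5) := by
  simp only [A15, Set.mem_insert_iff, Set.mem_singleton_iff] at hx hy
  rcases hx with rfl | rfl | rfl | rfl | rfl | rfl <;>
    rcases hy with rfl | rfl | rfl | rfl | rfl | rfl <;>
    revert hxy <;> norm_num [exD15, Set.pair_eq_pair_iff]

theorem exD15_le_of_mem_A15 {x y : ℝ} (hx : x ∈ A15) (hy : y ∈ A15) : exD15 x y ≤ 2/5 := by
  by_cases hxy : x = y
  · rw [exD15_eq_zero.2 hxy]; norm_num
  · exact (exD15_mem_Icc_of_mem_A15 hx hy hxy).2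

theorem le_exD15_of_mem_A15 {x y : ℝ} (hx : x ∈ A15) (hy : y ∈ X15) (hxy : x ≠ y) :
    1/20 ≤ exD15 x y := by
  rcases mem_X15.1 hy with hy | hy
  · exact (exD15_mem_Icc_of_mem_A15 hx hy hxy).1
  · linarith [quarter_le_exD15 hx hy.1]

theorem exD15_rect {x y u v : ℝ} (hx : x ∈ X15) (hy : y ∈ X15) (hu : u ∈ X15) (hv : v ∈ X15)
    (hxu : x ≠ u) (huv : u ≠ v) (hvy : v ≠ y) :
    exD15 x y ≤ 3 * (exD15 x u + exD15 u v + exD15 v y) := by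
  have hsq : exD15 x y = |x - y| ^ 2 →
      exD15 x y ≤ 3 * (exD15 x u + exD15 u v + exD15 v y) := by
    intro h
    have := dist_sq_le_three_mul_add x u v y
    simp only [Real.dist_eq] at this
    linarith [sq_abs_sub_le_exD15 x u, sq_abs_sub_le_exD15 u v, sq_abs_sub_le_exD15 v y]
  rcases (mem_X15.1 hx).symm with hxB | hxA
  · exact hsq (exD15_of_one_le hxB.1 y)
  rcases (mem_X15.1 hy).symm with hyB | hyA
  · exact hsq (by rw [exD15_comm, exD15_of_one_le hyB.1, abs_sub_comm])
  have hxy_le := exD15_le_of_mem_A15 hxA hyA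
  have hxu_ge := le_exD15_of_mem_A15 hxA hu hxu
  have hvy_ge := exD15_comm v y ▸ le_exD15_of_mem_A15 hyA hv hvy.symm
  have := exD15_nonneg u v
  rcases (mem_X15.1 hu).symm with huB | huA
  · linarith [quarter_le_exD15 hxA huB.1]
  · linarith [le_exD15_of_mem_A15 huA hv huv]

theorem rectB_exD15 : RectB (fun x y : X15 => exD15 x.1 y.1) 3 := by
  refine ⟨fun x y => exD15_nonneg x y, fun x y => exD15_eq_zero.trans Subtype.ext_iff.symm,
    fun x y => exD15_comm x y, ?_⟩
  intro x y u v huv hux _ _ hvy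
  exact exD15_rect x.2 y.2 u.2 v.2 (Subtype.coe_ne_coe.2 hux.symm) (Subtype.coe_ne_coe.2 huv)
    (Subtype.coe_ne_coe.2 hvy)

theorem not_b_triangle_three_exD15 :
    ¬ ∀ x y z : X15, exD15 x.1 z.1 ≤ 3 * (exD15 x.1 y.1 + exD15 y.1 z.1) := fun h => by
  have := h ⟨1/5, Or.inl (by norm_num [A15])⟩ ⟨1/6, Or.inl (by norm_num [A15])⟩
    ⟨1/7, Or.inl (by norm_num [A15])⟩
  norm_num [exD15, Set.pair_eq_pair_iff] at this

theorem not_rectB_one_exD15 : ¬ RectB (fun x y : X15 => exD15 x.1 y.1) 1 := fun h => by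
  have := h.2.2.2 ⟨1/2, Or.inl (by norm_num [A15])⟩ ⟨1/6, Or.inl (by norm_num [A15])⟩
    ⟨1/3, Or.inl (by norm_num [A15])⟩ ⟨1/7, Or.inl (by norm_num [A15])⟩
  norm_num [exD15, Set.pair_eq_pair_iff] at this

theorem stmt15 :
    RectB (fun x y : X15 => exD15 x.1 y.1) 3 ∧
    ¬ (∀ x y z : X15, exD15 x.1 z.1 ≤ exD15 x.1 y.1 + exD15 y.1 z.1) ∧
    ¬ (∀ x y z : X15, exD15 x.1 z.1 ≤ 3 * (exD15 x.1 y.1 + exD15 y.1 z.1)) ∧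
    ¬ RectB (fun x y : X15 => exD15 x.1 y.1) 1 := by
  refine ⟨rectB_exD15, fun h => not_b_triangle_three_exD15 fun x y z => ?_,
    not_b_triangle_three_exD15, not_rectB_one_exD15⟩
  linarith [h x y z, exD15_nonneg x y, exD15_nonneg y z]
end
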